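/- arXiv:1606.09547 — 5 statements merged into one kernel-verified Lean document; each statement's English description precedes it below -/
import Mathlib

section
/- Let a ∈ ℂ with a ≠ 0, let U ⊆ ℂ be open, and let f : ℕ → ℂ → ℂ be a family of infinitely differentiable functions on U satisfying the recurrences f₀'(w) = −f₁(w) and fᵥ'(w) = (f_{ν−1}(w) − f_{ν+1}(w))/2 for all ν ≥ 1 and all w ∈ U. For m ∈ ℕ let B_m ∈ Matrix (Fin m) (Fin m) ℂ be the tridiagonal matrix with zero diagonal, (B_m)_{0,1} = −1, and (B_m)_{i,i−1} = 1/2, (B_m)_{i,i+1} = −1/2 for 1 ≤ i ≤ m−1 (entries zero whenever |i−j| > 1). Then for every r ≥ 1, every k ∈ ℕ, every ν < r, and every z₀ ∈ ℂ with a·z ∈ U for all z in a neighborhood of z₀, the k-th derivative of z ↦ fᵥ(a·z) at z₀ equals a^k · Σ_{j=0}^{r+k−1} (B_{r+k}^k)_{ν,j} · f_j(a·z₀). -/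
/-!
The recurrences say that the vector `F = (f₀, f₁, …)` satisfies `F' = B F` for the infinite
tridiagonal matrix `B`, so differentiating `z ↦ F (a z)` `k` times gives `a ^ k • Bᵏ F (a z)`.
Truncating `B` to `B_m` is harmless as long as `ν + k < m`: since `B` has upper bandwidth one,
row `ν` of `B_mᵏ` only involves the indices `j ≤ ν + k`, and the rows `j < m - 1` of `B_m`
are those of `B`.
-/

open Matrix

/-- The tridiagonal matrix `B_m` of the Hankel-function derivative recursion:
zero diagonal, `(B_m)_{0,1} = -1`, `(B_m)_{i,i-1} = 1/2` and `(B_m)_{i,i+1} = -1/2`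
for `i ≥ 1`, all other entries zero. -/
noncomputable def Bmat (m : ℕ) : Matrix (Fin m) (Fin m) ℂ :=
  fun i j =>
    if (j : ℕ) = (i : ℕ) + 1 then (if (i : ℕ) = 0 then -1 else -(1/2))
    else if (i : ℕ) = (j : ℕ) + 1 then 1/2
    else 0

open Topology

theorem Matrix.pow_apply_eq_zero_of_add_lt {R : Type*} [Semiring R] {m : ℕ}
    {M : Matrix (Fin m) (Fin m) R} (hM : ∀ i j : Fin m, (i : ℕ) + 1 < j → M i j = 0)
    (k : ℕ) {i j : Fin m} (h : (i : ℕ) + k < j) : (M ^ k) i j = 0 := by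
  induction k generalizing j with
  | zero => exact one_apply_ne (Fin.ne_of_lt (by omega))
  | succ k ih =>
    rw [pow_succ, mul_apply]
    refine Finset.sum_eq_zero fun l _ => ?_
    rcases lt_or_ge ((i : ℕ) + k) l with hl | hl
    · rw [ih hl, zero_mul]
    · rw [hM l j (by omega), mul_zero]

theorem Bmat_apply_eq_zero_of_add_one_lt {m : ℕ} (i j : Fin m) (h : (i : ℕ) + 1 < j) :
    Bmat m i j = 0 := by
  simp only [Bmat]
  rw [if_neg (by omega), if_neg (by omega)]

theorem deriv_eq_Bmat_mulVec {U : Set ℂ} {f : ℕ → ℂ → ℂ}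
    (hrec0 : ∀ w ∈ U, deriv (f 0) w = -(f 1 w))
    (hrec : ∀ ν : ℕ, 1 ≤ ν → ∀ w ∈ U, deriv (f ν) w = (f (ν - 1) w - f (ν + 1) w) / 2)
    {m : ℕ} (j : Fin m) (hj : (j : ℕ) + 1 < m) {w : ℂ} (hw : w ∈ U) :
    deriv (f j) w = (Bmat m *ᵥ fun l => f l w) j := by
  obtain ⟨_ | n, hn⟩ := j
  · rw [hrec0 w hw, mulVec, dotProduct, Finset.sum_eq_single ⟨1, hj⟩]
    · simp [Bmat]
    · rintro ⟨l, hl⟩ - hl1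
      rw [ne_eq, Fin.mk.injEq] at hl1
      simp only [Bmat]
      rw [if_neg (by omega), if_neg (by omega), zero_mul]
    · simp
  · rw [hrec (n + 1) (by omega) w hw, mulVec, dotProduct,
      Finset.sum_eq_add ⟨n, by omega⟩ ⟨n + 2, hj⟩ (by simp [Fin.ext_iff])]
    · have h₁ : Bmat m ⟨n + 1, hn⟩ ⟨n, by omega⟩ = 1 / 2 := by
        simp [Bmat, show n ≠ n + 1 + 1 by omega]
      have h₂ : Bmat m ⟨n + 1, hn⟩ ⟨n + 2, hj⟩ = -(1 / 2) := by simp [Bmat]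
      rw [h₁, h₂, Nat.add_sub_cancel]
      ring
    · rintro ⟨l, hl⟩ - ⟨hl1, hl2⟩
      rw [ne_eq, Fin.mk.injEq] at hl1 hl2
      simp only [Bmat]
      rw [if_neg (by omega), if_neg (by omega), zero_mul]
    all_goals simp

theorem iteratedDeriv_comp_const_mul_eq_Bmat_pow_mulVec {a : ℂ} {U : Set ℂ} (hU : IsOpen U)
    {f : ℕ → ℂ → ℂ} (hf : ∀ ν, DifferentiableOn ℂ (f ν) U)
    (hrec0 : ∀ w ∈ U, deriv (f 0) w = -(f 1 w))
    (hrec : ∀ ν : ℕ, 1 ≤ ν → ∀ w ∈ U, deriv (f ν) w = (f (ν - 1) w - f (ν + 1) w) / 2)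
    {m : ℕ} (k : ℕ) (ν : Fin m) (hν : (ν : ℕ) + k < m) {z : ℂ} (hz : a * z ∈ U) :
    iteratedDeriv k (fun z => f ν (a * z)) z = a ^ k * (Bmat m ^ k *ᵥ fun j => f j (a * z)) ν := by
  induction k generalizing z with
  | zero => simp
  | succ k ih =>
    have hnear : ∀ᶠ y in 𝓝 z, a * y ∈ U :=
      (hU.preimage (continuous_const_mul a)).mem_nhds hz
    have hIH : iteratedDeriv k (fun z => f ν (a * z)) =ᶠ[𝓝 z]
        fun y => a ^ k * (Bmat m ^ k *ᵥ fun j => f j (a * y)) ν :=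
      hnear.mono fun y hy => ih (by omega) hy
    have hderiv : HasDerivAt (fun w => (Bmat m ^ k *ᵥ fun j => f j w) ν)
        ((Bmat m ^ k *ᵥ fun j => deriv (f j) (a * z)) ν) (a * z) :=
      HasDerivAt.fun_sum (u := (Finset.univ : Finset (Fin m))) fun j _ =>
        ((hf j).differentiableAt (hU.mem_nhds hz)).hasDerivAt.const_mul ((Bmat m ^ k) ν j)
    have hderiv_comp : HasDerivAt (fun y => a ^ k * (Bmat m ^ k *ᵥ fun j => f j (a * y)) ν)
        (a ^ k * ((Bmat m ^ k *ᵥ fun j => deriv (f j) (a * z)) ν * a)) z :=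
      (hderiv.comp z (hasDerivAt_const_mul a)).const_mul (a ^ k)
    have hrow : (Bmat m ^ k *ᵥ fun j => deriv (f j) (a * z)) ν =
        (Bmat m ^ k *ᵥ Bmat m *ᵥ fun j => f j (a * z)) ν := by
      change ∑ j, (Bmat m ^ k) ν j * deriv (f j) (a * z) =
        ∑ j, (Bmat m ^ k) ν j * (Bmat m *ᵥ fun l => f l (a * z)) j
      refine Finset.sum_congr rfl fun j _ => ?_
      rcases le_or_gt (j : ℕ) (ν + k) with hj | hj
      · rw [deriv_eq_Bmat_mulVec hrec0 hrec j (by omega) hz]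
      · rw [pow_apply_eq_zero_of_add_lt Bmat_apply_eq_zero_of_add_one_lt k hj, zero_mul,
          zero_mul]
    rw [iteratedDeriv_succ, hIH.deriv_eq, hderiv_comp.deriv, hrow, mulVec_mulVec, ← pow_succ]
    ring

theorem stmt0 (a : ℂ) (U : Set ℂ) (hU : IsOpen U)
    (f : ℕ → ℂ → ℂ) (hf : ∀ ν : ℕ, ContDiffOn ℂ ⊤ (f ν) U)
    (hrec0 : ∀ w ∈ U, deriv (f 0) w = -(f 1 w))
    (hrec : ∀ ν : ℕ, 1 ≤ ν → ∀ w ∈ U, deriv (f ν) w = (f (ν - 1) w - f (ν + 1) w) / 2)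
    (r : ℕ) (k : ℕ) (ν : ℕ) (hν : ν < r) (z₀ : ℂ)
    (hz : ∀ᶠ z in nhds z₀, a * z ∈ U) :
    iteratedDeriv k (fun z => f ν (a * z)) z₀ =
      a ^ k * ∑ j : Fin (r + k),
        ((Bmat (r + k)) ^ k) ⟨ν, by omega⟩ j * f (j : ℕ) (a * z₀) :=
  iteratedDeriv_comp_const_mul_eq_Bmat_pow_mulVec hU (fun ν => (hf ν).differentiableOn (by simp))
    hrec0 hrec k ⟨ν, by omega⟩ (Nat.add_lt_add_right hν k) hz.self_of_nhds
end

section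
/- Let n ∈ ℕ, μ ∈ ℂ, and let J_μ ∈ Matrix (Fin n) (Fin n) ℂ be the Jordan block with (J_μ)_{i j} = μ if j = i, 1 if j = i + 1, and 0 otherwise. Then for every polynomial p ∈ ℂ[X], the matrix p(J_μ) (the evaluation of p at J_μ via the polynomial functional calculus aeval) is upper-triangular Toeplitz with entries (p(J_μ))_{i j} = (d^{j−i}p/dX^{j−i})(μ) / (j−i)! for j ≥ i, and (p(J_μ))_{i j} = 0 for j < i. -/
/-! Write `J_μ = N + μ` with `N` the nilpotent shift. Then `p(J_μ) = q(N)` for the Taylor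
expansion `q = p(X + μ)` of `p` at `μ`. Since `N ^ k` is the indicator matrix of the `k`-th
superdiagonal, the `(i, j)` entry of `q(N)` is the coefficient of `X ^ (j - i)` in `q`, which is
`p^{(j-i)}(μ) / (j - i)!`. -/

open Matrix Polynomial

/-- The Jordan block `J_μ` of size `n`: `μ` on the diagonal, `1` on the
superdiagonal, `0` elsewhere. -/
def JordanBlock (n : ℕ) (μ : ℂ) : Matrix (Fin n) (Fin n) ℂ :=
  fun i j => if j = i then μ else if (j : ℕ) = (i : ℕ) + 1 then 1 else 0

def shiftMatrix (R : Type*) [Zero R] [One R] (n : ℕ) : Matrix (Fin n) (Fin n) R :=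
  fun i j => if (j : ℕ) = i + 1 then 1 else 0

section ShiftMatrix

variable {R : Type*} {n : ℕ}

theorem shiftMatrix_pow_apply [Semiring R] (k : ℕ) (i j : Fin n) :
    (shiftMatrix R n ^ k) i j = if (j : ℕ) = i + k then 1 else 0 := by
  induction k generalizing j with
  | zero => simp [one_apply, Fin.ext_iff, eq_comm]
  | succ k ih =>
    rw [pow_succ, mul_apply]
    simp only [ih, shiftMatrix, mul_ite, mul_one, mul_zero]
    rw [Fin.sum_univ_eq_sum_range
      (fun l => if (j : ℕ) = l + 1 then if l = (i : ℕ) + k then (1 : R) else 0 else 0),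
      Finset.sum_eq_single ((i : ℕ) + k)]
    · split_ifs <;> first | rfl | omega
    · intro l _ hl
      simp [hl]
    · intro hik
      rw [Finset.mem_range] at hik
      split_ifs <;> first | rfl | omega

theorem aeval_shiftMatrix_apply [CommSemiring R] (q : R[X]) (i j : Fin n) :
    aeval (shiftMatrix R n) q i j = if (i : ℕ) ≤ j then q.coeff (j - i) else 0 := by
  induction q using Polynomial.induction_on' with
  | add p q hp hq =>
    rw [map_add, Matrix.add_apply, hp, hq]
    split_ifs <;> simp
  | monomial m a =>
    rw [aeval_monomial, ← Algebra.smul_def, Matrix.smul_apply, shiftMatrix_pow_apply,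
      coeff_monomial]
    split_ifs <;> first | (exfalso; omega) | simp

end ShiftMatrix

theorem JordanBlock_eq_shiftMatrix_add (n : ℕ) (μ : ℂ) :
    JordanBlock n μ = shiftMatrix ℂ n + algebraMap ℂ _ μ := by
  ext i j
  simp only [JordanBlock, shiftMatrix, Matrix.add_apply, algebraMap_matrix_apply,
    Algebra.algebraMap_self, RingHom.id_apply]
  split_ifs <;> simp_all [Fin.ext_iff]

theorem taylor_coeff_eq_eval_iterate_derivative_div_factorial {K : Type*} [Field K] [CharZero K]
    (r : K) (f : K[X]) (k : ℕ) :
    (taylor r f).coeff k = (derivative^[k] f).eval r / k.factorial := by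
  rw [taylor_coeff, ← factorial_smul_hasseDeriv,
    eq_div_iff (Nat.cast_ne_zero.2 k.factorial_ne_zero), LinearMap.smul_apply, eval_smul,
    nsmul_eq_mul, mul_comm]

/-- A polynomial evaluated at a Jordan block is the upper-triangular Toeplitz
matrix of scaled derivatives: `(p(J_μ))_{ij} = p^{(j-i)}(μ)/(j-i)!` for `j ≥ i`,
and `0` for `j < i`. -/
theorem stmt3 (n : ℕ) (μ : ℂ) (p : ℂ[X]) (i j : Fin n) :
    (Polynomial.aeval (JordanBlock n μ) p) i j =
      if (i : ℕ) ≤ (j : ℕ) then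
        ((Polynomial.derivative^[(j : ℕ) - (i : ℕ)] p).eval μ) /
          (((j : ℕ) - (i : ℕ)).factorial : ℂ)
      else 0 := by
  have hJ : JordanBlock n μ = aeval (shiftMatrix ℂ n) (X + C μ) := by
    simp [JordanBlock_eq_shiftMatrix_add]
  rw [hJ, ← aeval_comp, ← taylor_apply, aeval_shiftMatrix_apply,
    taylor_coeff_eq_eval_iterate_derivative_div_factorial]
end

section
/- Let n ∈ ℕ, μ ∈ ℂ, and let J_μ ∈ Matrix (Fin n) (Fin n) ℂ be the Jordan block with (J_μ)_{i j} = μ if j = i, 1 if j = i + 1, and 0 otherwise. Then for every polynomial p ∈ ℂ[X] and every i ∈ Fin n, the first column of p(J_μᵀ) satisfies i! · (p(J_μᵀ))_{i 0} = (d^{i}p/dX^{i})(μ); that is, the vector of entries of the first column of p(J_μᵀ) is the vector of scaled derivatives p^{(i)}(μ)/i!. -/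
open Matrix Polynomial

lemma pow_entry (n : ℕ) (μ : ℂ) (k : ℕ) (i : Fin n) :
    ((JordanBlock n μ)ᵀ ^ k) i ⟨0, i.pos⟩ = (k.choose i) * μ ^ (k - (i : ℕ)) := by
  induction k generalizing i with
  | zero =>
    rw [pow_zero]
    by_cases h : (i : ℕ) = 0
    · have : i = ⟨0, i.pos⟩ := Fin.ext h
      simp [this, Matrix.one_apply, h]
    · rw [Matrix.one_apply_ne (by simp [Fin.ext_iff, h])]
      simp [Nat.choose_eq_zero_of_lt (Nat.pos_of_ne_zero h)]
  | succ k ih =>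
    rw [pow_succ']
    rw [Matrix.mul_apply]
    have hsplit : ∀ j : Fin n,
        (JordanBlock n μ)ᵀ i j * ((JordanBlock n μ)ᵀ ^ k) j ⟨0, i.pos⟩ =
        (if j = i then μ * ((JordanBlock n μ)ᵀ ^ k) i ⟨0, i.pos⟩ else 0) +
        (if (i : ℕ) = (j : ℕ) + 1 then ((JordanBlock n μ)ᵀ ^ k) j ⟨0, i.pos⟩ else 0) := by
      intro j
      by_cases h1 : j = i
      · subst h1
        simp [Matrix.transpose_apply, JordanBlock]
      · by_cases h2 : (i : ℕ) = (j : ℕ) + 1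
        · simp [Matrix.transpose_apply, JordanBlock, h1, h2, Ne.symm h1]
        · simp [Matrix.transpose_apply, JordanBlock, h1, h2, Ne.symm h1]
    rw [Finset.sum_congr rfl (fun j _ => hsplit j), Finset.sum_add_distrib,
      Finset.sum_ite_eq' Finset.univ i]
    simp only [Finset.mem_univ, if_true]
    obtain ⟨iv, hiv⟩ := i
    rcases iv with _ | m
    · have : ∀ j : Fin n, ¬ ((⟨0, hiv⟩ : Fin n) : ℕ) = (j : ℕ) + 1 := by
        intro j; simp
      rw [Finset.sum_eq_zero (fun j _ => by rw [if_neg (this j)])]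
      rw [ih]
      simp [pow_succ]
      ring
    · have hm : m < n := Nat.lt_of_succ_lt hiv
      have hcond : ∀ j : Fin n, (((⟨m+1, hiv⟩ : Fin n) : ℕ) = (j : ℕ) + 1) ↔ j = ⟨m, hm⟩ := by
        intro j; simp [Fin.ext_iff]; omega
      rw [Finset.sum_congr rfl (fun j _ => by rw [if_congr (hcond j) rfl rfl]),
        Finset.sum_ite_eq' Finset.univ (⟨m, hm⟩ : Fin n)]
      simp only [Finset.mem_univ, if_true]
      rw [ih, ih]
      simp only [Fin.val_mk]
      rw [Nat.choose_succ_succ (k) m]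
      have h2 : k + 1 - (m + 1) = k - m := by omega
      rw [h2]
      push_cast
      simp only [Nat.succ_eq_add_one]
      rcases lt_or_ge m k with h | h
      · have h1 : k - m = (k - (m+1)) + 1 := by omega
        rw [h1, pow_succ]
        ring
      · have h1 : Nat.choose k (m+1) = 0 := Nat.choose_eq_zero_of_lt (by omega)
        have h2' : k - m = 0 := by omega
        rw [h1, h2']
        push_cast
        ring

lemma iter_der_add (k : ℕ) (p q : ℂ[X]) :
    Polynomial.derivative^[k] (p + q) = Polynomial.derivative^[k] p + Polynomial.derivative^[k] q := by
  induction k generalizing p q with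
  | zero => simp
  | succ k ih => simp [Function.iterate_succ_apply, ih]

/-- The first column of `p(J_μᵀ)` consists of the scaled derivatives of `p` at
`μ`: `i! ⬝ (p(J_μᵀ))_{i,0} = p^{(i)}(μ)`. -/
theorem stmt4 (n : ℕ) (μ : ℂ) (p : ℂ[X]) (i : Fin n) :
    (((i : ℕ).factorial : ℂ)) * (Polynomial.aeval (JordanBlock n μ)ᵀ p) i ⟨0, i.pos⟩ =
      (Polynomial.derivative^[(i : ℕ)] p).eval μ := by
  induction p using Polynomial.induction_on' with
  | add p q hp hq =>
    simp only [map_add, Matrix.add_apply, eval_add, iter_der_add]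
    rw [mul_add, hp, hq]
  | monomial k a =>
    rw [← Polynomial.C_mul_X_pow_eq_monomial, _root_.map_mul, aeval_C, map_pow, aeval_X]
    rw [Polynomial.iterate_derivative_C_mul, Polynomial.iterate_derivative_X_pow_eq_C_mul]
    have hL : (algebraMap ℂ (Matrix (Fin n) (Fin n) ℂ) a * (JordanBlock n μ)ᵀ ^ k) i ⟨0, i.pos⟩
        = a * ((JordanBlock n μ)ᵀ ^ k) i ⟨0, i.pos⟩ := by
      rw [Algebra.algebraMap_eq_smul_one, smul_mul_assoc, one_mul, Matrix.smul_apply,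
        smul_eq_mul]
    rw [hL, pow_entry]
    simp only [eval_mul, eval_C, eval_pow, eval_X]
    rw [Nat.descFactorial_eq_factorial_mul_choose]
    push_cast
    ring
end

section
/- Let μ ∈ ℂ, n ∈ ℕ, and for f : ℂ → ℂ define the lower-triangular Toeplitz matrix T_n(f) ∈ Matrix (Fin n) (Fin n) ℂ by (T_n(f))_{i j} = (iteratedDeriv (i−j) f μ)/(i−j)! when i ≥ j and 0 when i < j. If h is analytic at μ and h(μ) ≠ 0, then T_n(h) is invertible and T_n(h) · T_n(fun z => (h z)⁻¹) = 1; in particular (T_n(h))⁻¹ = T_n(fun z => (h z)⁻¹). -/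
/-- The lower-triangular Toeplitz matrix of scaled derivatives of `f` at `μ`:
`(T_n(f))_{ij} = f^{(i-j)}(μ)/(i-j)!` for `i ≥ j` and `0` otherwise. -/
noncomputable def Toep (μ : ℂ) (n : ℕ) (f : ℂ → ℂ) : Matrix (Fin n) (Fin n) ℂ :=
  fun i j =>
    if (j : ℕ) ≤ (i : ℕ) then
      iteratedDeriv ((i : ℕ) - (j : ℕ)) f μ / (((i : ℕ) - (j : ℕ)).factorial : ℂ)
    else 0

/-!
`T_n(f)` only depends on the Taylor coefficients `a_k = f^{(k)}(μ)/k!` of `f`, and the product of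
two lower-triangular Toeplitz matrices is the lower-triangular Toeplitz matrix of the Cauchy
product of their sequences. By the Leibniz rule the Cauchy product of the Taylor coefficients of
`f` and `g` is the sequence of Taylor coefficients of `f * g`, so `T_n(f) T_n(g) = T_n(f g)`.
For `g = 1/h`, the product `h g` is `1` near `μ`, and `T_n(1)` is the identity.
-/

open Finset Filter Topology Nat

namespace Matrix

variable {R : Type*} {n : ℕ}

def lowerToeplitz [Zero R] (n : ℕ) (a : ℕ → R) : Matrix (Fin n) (Fin n) R :=
  fun i j => if (j : ℕ) ≤ i then a (i - j) else 0

theorem lowerToeplitz_mul_lowerToeplitz [CommSemiring R] (a b : ℕ → R) :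
    lowerToeplitz n a * lowerToeplitz n b =
      lowerToeplitz n (fun N => ∑ p ∈ antidiagonal N, a p.1 * b p.2) := by
  ext i j
  simp only [mul_apply, lowerToeplitz, mul_ite, ite_mul, zero_mul, mul_zero]
  split_ifs with hji
  · rw [← sum_filter, ← sum_filter, filter_filter]
    refine sum_bij' (fun k _ => ((i : ℕ) - k, (k : ℕ) - j))
      (fun p hp => ⟨j + p.2, by have := HasAntidiagonal.mem_antidiagonal.mp hp; omega⟩)
      ?_ ?_ ?_ ?_ fun _ _ => rfl
    · intro k hk
      simp only [mem_filter, mem_univ, true_and] at hk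
      simp only [HasAntidiagonal.mem_antidiagonal]
      omega
    · intro p hp
      have := HasAntidiagonal.mem_antidiagonal.mp hp
      simp only [mem_filter, mem_univ, true_and]
      omega
    · intro k hk
      simp only [mem_filter, mem_univ, true_and] at hk
      ext
      simp only
      omega
    · intro p hp
      have := HasAntidiagonal.mem_antidiagonal.mp hp
      ext <;> simp only <;> omega
  · refine sum_eq_zero fun k _ => ?_
    split_ifs <;> first | rfl | omega

theorem lowerToeplitz_ite_zero_eq_one [Semiring R] :
    lowerToeplitz n (fun k => if k = 0 then (1 : R) else 0) = 1 := by
  ext i j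
  simp only [lowerToeplitz, one_apply, Fin.ext_iff]
  split_ifs <;> first | rfl | omega

end Matrix

theorem iteratedDeriv_fun_mul_div_factorial {𝕜 : Type*} [NontriviallyNormedField 𝕜] [CharZero 𝕜]
    {f g : 𝕜 → 𝕜} {x : 𝕜} {N : ℕ} (hf : ContDiffAt 𝕜 N f x) (hg : ContDiffAt 𝕜 N g x) :
    iteratedDeriv N (fun y => f y * g y) x / N ! =
      ∑ p ∈ antidiagonal N, iteratedDeriv p.1 f x / p.1 ! * (iteratedDeriv p.2 g x / p.2 !) := by
  rw [iteratedDeriv_fun_mul hf hg, Nat.sum_antidiagonal_eq_sum_range_succ_mk, sum_div]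
  refine sum_congr rfl fun k hk => ?_
  rw [Nat.cast_choose 𝕜 (mem_range_succ_iff.mp hk)]
  have : (N ! : 𝕜) ≠ 0 := Nat.cast_ne_zero.mpr N.factorial_ne_zero
  field_simp

section Toep

variable {μ : ℂ} {n : ℕ} {f g : ℂ → ℂ}

theorem Toep_eq_lowerToeplitz (μ : ℂ) (n : ℕ) (f : ℂ → ℂ) :
    Toep μ n f = Matrix.lowerToeplitz n (fun k => iteratedDeriv k f μ / k !) :=
  rfl

theorem Toep_congr_of_eventuallyEq (hfg : f =ᶠ[𝓝 μ] g) : Toep μ n f = Toep μ n g := by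
  simp only [Toep_eq_lowerToeplitz, hfg.iteratedDeriv_eq]

theorem Toep_const_one : Toep μ n (fun _ => 1) = 1 := by
  rw [Toep_eq_lowerToeplitz, ← Matrix.lowerToeplitz_ite_zero_eq_one]
  congr 1 with k
  rw [iteratedDeriv_const]
  split_ifs with hk <;> simp [hk]

theorem Toep_mul_Toep (hf : ContDiffAt ℂ n f μ) (hg : ContDiffAt ℂ n g μ) :
    Toep μ n f * Toep μ n g = Toep μ n (fun z => f z * g z) := by
  ext i j
  rw [Toep_eq_lowerToeplitz, Toep_eq_lowerToeplitz, Toep_eq_lowerToeplitz,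
    Matrix.lowerToeplitz_mul_lowerToeplitz]
  simp only [Matrix.lowerToeplitz]
  split_ifs
  · have hle : ((i - j : ℕ) : WithTop ℕ∞) ≤ n := by
      exact_mod_cast (Nat.sub_le i j).trans i.is_le'
    exact (iteratedDeriv_fun_mul_div_factorial (hf.of_le hle) (hg.of_le hle)).symm
  · rfl

end Toep

/-- If `h` is analytic at `μ` with `h μ ≠ 0`, then `T_n(h)` is invertible, its
product with the Toeplitz matrix of the reciprocal is the identity, and its
inverse is the Toeplitz matrix of the reciprocal. -/
theorem stmt6 (μ : ℂ) (n : ℕ) (h : ℂ → ℂ)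
    (hh : AnalyticAt ℂ h μ) (h0 : h μ ≠ 0) :
    IsUnit (Toep μ n h) ∧
      Toep μ n h * Toep μ n (fun z => (h z)⁻¹) = 1 ∧
      (Toep μ n h)⁻¹ = Toep μ n (fun z => (h z)⁻¹) := by
  have hinv : AnalyticAt ℂ (fun z => (h z)⁻¹) μ := hh.inv h0
  have h_mul_inv : (fun z => h z * (h z)⁻¹) =ᶠ[𝓝 μ] fun _ => 1 := by
    filter_upwards [hh.continuousAt.eventually_ne h0] with z hz
    exact mul_inv_cancel₀ hz
  have hprod : Toep μ n h * Toep μ n (fun z => (h z)⁻¹) = 1 := by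
    rw [Toep_mul_Toep hh.contDiffAt hinv.contDiffAt,
      Toep_congr_of_eventuallyEq h_mul_inv, Toep_const_one]
  exact ⟨.of_mul_eq_one _ hprod, hprod, Matrix.inv_eq_right_inv hprod⟩
end

section
/- Let E be an infinite-dimensional complex Banach space, z ∈ ℂ, r > 0, s ≥ 1 a natural number, and let F : ℕ → (E →L[ℂ] E) be a sequence of bounded linear operators (with F n representing the Laurent coefficient of index n − s). Suppose that for every λ with 0 < |λ − z| < r, the series Σ_{n : ℕ} (λ − z)^{(n : ℤ) − s} • (F n) converges in operator norm to an operator 𝓕(λ), and that the power series Σ_n (λ − z)^n • F n converges on the disk |λ − z| < r. Define T̃(λ) = (λ − z)^s • (id − 𝓕(λ)) for λ ≠ z. Then there exists a function G analytic on the ball {λ : |λ − z| < r} with values in E →L[ℂ] E such that G(λ) = T̃(λ) for all 0 < |λ − z| < r and G(z) = −(F 0), i.e. the analytic extension of T̃ at z equals minus the most singular Laurent coefficient F_{−s}. Moreover, if the range of F 0 is finite-dimensional, then the kernel of G(z) is infinite-dimensional. -/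
/-!
Multiplying the Laurent series by `(λ - z)^s` shifts it into the power series
`Σ (λ - z)^n • F n`, which converges on the whole disk and is therefore analytic there; at `λ = z`
only its constant term `F 0` survives, while `(λ - z)^s • I` vanishes since `s ≥ 1`. A finite-rank
operator on an infinite-dimensional space has infinite-dimensional kernel, since `E` is an
extension of its range by its kernel.
-/

open Metric

namespace FormalMultilinearSeries

section NontriviallyNormedField

variable {𝕜 V : Type*} [NontriviallyNormedField 𝕜] [NormedAddCommGroup V] [NormedSpace 𝕜 V]

def ofCoeff (a : ℕ → V) : FormalMultilinearSeries 𝕜 𝕜 V :=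
  fun n => ContinuousMultilinearMap.mkPiRing 𝕜 (Fin n) (a n)

@[simp]
theorem ofCoeff_apply_const (a : ℕ → V) (n : ℕ) (w : 𝕜) :
    (ofCoeff a n fun _ => w) = w ^ n • a n := by
  simp [ofCoeff]

@[simp]
theorem coeff_ofCoeff (a : ℕ → V) (n : ℕ) :
    (ofCoeff a : FormalMultilinearSeries 𝕜 𝕜 V).coeff n = a n := by
  simp [ofCoeff, coeff]

end NontriviallyNormedField

variable {𝕜 V : Type*} [RCLike 𝕜] [NormedAddCommGroup V] [NormedSpace 𝕜 V]

theorem le_radius_ofCoeff {a : ℕ → V} {r : ℝ}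
    (hsum : ∀ w : 𝕜, ‖w‖ < r → Summable fun n => w ^ n • a n) :
    ENNReal.ofReal r ≤ (ofCoeff a : FormalMultilinearSeries 𝕜 𝕜 V).radius := by
  refine ENNReal.le_of_forall_nnreal_lt fun t ht => ?_
  have htr : (t : ℝ) < r := by
    rw [← ENNReal.ofReal_coe_nnreal] at ht
    exact (ENNReal.ofReal_lt_ofReal_iff'.mp ht).1
  refine le_radius_of_tendsto _ (l := 0) ?_
  have := (hsum ((t : ℝ) : 𝕜) (by simpa using htr)).tendsto_atTop_zero.norm
  simpa [norm_smul, mul_comm] using this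

theorem hasFPowerSeriesOnBall_ofCoeff {a : ℕ → V} {z : 𝕜} {r : ℝ} (hr : 0 < r)
    (hsum : ∀ w : 𝕜, ‖w - z‖ < r → Summable fun n => (w - z) ^ n • a n) :
    HasFPowerSeriesOnBall (fun w => ∑' n, (w - z) ^ n • a n) (ofCoeff a) z
      (ENNReal.ofReal r) where
  r_le := le_radius_ofCoeff fun w hw => by simpa using hsum (z + w) (by simpa using hw)
  r_pos := ENNReal.ofReal_pos.mpr hr
  hasSum {y} hy := by
    rw [eball_ofReal, mem_ball_zero_iff] at hy
    simpa using (hsum (z + y) (by simpa using hy)).hasSum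

end FormalMultilinearSeries

open FormalMultilinearSeries in
theorem analyticOnNhd_tsum_sub_pow_smul {𝕜 V : Type*} [RCLike 𝕜] [NormedAddCommGroup V]
    [NormedSpace 𝕜 V] [CompleteSpace V] {a : ℕ → V} {z : 𝕜} {r : ℝ}
    (hsum : ∀ w : 𝕜, ‖w - z‖ < r → Summable fun n => (w - z) ^ n • a n) :
    AnalyticOnNhd 𝕜 (fun w => ∑' n, (w - z) ^ n • a n) (ball z r) := by
  intro w hw
  have hr : 0 < r := pos_of_mem_ball hw
  rw [← eball_ofReal] at hw
  exact (hasFPowerSeriesOnBall_ofCoeff hr hsum).analyticOnNhd w hw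

theorem tsum_zero_pow_smul {R V : Type*} [MonoidWithZero R] [AddCommMonoid V]
    [MulActionWithZero R V] [TopologicalSpace V] (a : ℕ → V) :
    ∑' n, (0 : R) ^ n • a n = a 0 := by
  rw [tsum_eq_single 0 fun n hn => by simp [zero_pow hn]]
  simp

theorem HasSum.pow_smul_of_zpow_sub_smul {𝕜 V : Type*} [Field 𝕜] [AddCommMonoid V]
    [Module 𝕜 V] [TopologicalSpace V] [ContinuousConstSMul 𝕜 V]
    {w : 𝕜} (hw : w ≠ 0) {s : ℕ} {a : ℕ → V} {b : V}
    (h : HasSum (fun n : ℕ => w ^ ((n : ℤ) - s) • a n) b) :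
    HasSum (fun n => w ^ n • a n) (w ^ s • b) := by
  convert h.const_smul (w ^ s) using 2 with n
  rw [smul_smul, ← zpow_natCast, ← zpow_natCast, ← zpow_add₀ hw, add_sub_cancel]

theorem LinearMap.finite_of_finite_ker_of_finite_range {R M N : Type*} [Ring R]
    [AddCommGroup M] [Module R M] [AddCommGroup N] [Module R N]
    (f : M →ₗ[R] N) [Module.Finite R (ker f)] [Module.Finite R (range f)] :
    Module.Finite R M := by
  refine Module.Finite.of_exact (f := (ker f).subtype) (g := f.rangeRestrict) ?_
    f.surjective_rangeRestrict
  rw [LinearMap.exact_iff, ker_rangeRestrict, Submodule.range_subtype]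

theorem stmt11_general (E : Type*) [NormedAddCommGroup E] [NormedSpace ℂ E] [CompleteSpace E]
    (hE : ¬ FiniteDimensional ℂ E)
    (z : ℂ) (r : ℝ) (s : ℕ) (hs : 1 ≤ s)
    (F : ℕ → E →L[ℂ] E) (𝓕 : ℂ → E →L[ℂ] E)
    (hsum : ∀ lam : ℂ, 0 < ‖lam - z‖ → ‖lam - z‖ < r →
      HasSum (fun n : ℕ => ((lam - z) ^ ((n : ℤ) - (s : ℤ))) • F n) (𝓕 lam))
    (hps : ∀ lam : ℂ, ‖lam - z‖ < r →
      Summable (fun n : ℕ => ((lam - z) ^ n) • F n)) :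
    ∃ G : ℂ → E →L[ℂ] E,
      AnalyticOnNhd ℂ G (ball z r) ∧
      (∀ lam : ℂ, 0 < ‖lam - z‖ → ‖lam - z‖ < r →
        G lam = ((lam - z) ^ s) •
          (ContinuousLinearMap.id ℂ E - 𝓕 lam)) ∧
      G z = -(F 0) ∧
      (FiniteDimensional ℂ (LinearMap.range (F 0 : E →ₗ[ℂ] E)) →
        ¬ FiniteDimensional ℂ (LinearMap.ker (G z : E →ₗ[ℂ] E))) := by
  set G : ℂ → E →L[ℂ] E :=
    fun lam => (lam - z) ^ s • ContinuousLinearMap.id ℂ E - ∑' n, (lam - z) ^ n • F n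
  have hGz : G z = -(F 0) := by
    simp [G, tsum_zero_pow_smul, zero_pow (Nat.one_le_iff_ne_zero.mp hs)]
  refine ⟨G, ?_, fun lam h0 h1 => ?_, hGz, fun hrange hker => ?_⟩
  · exact (((analyticOnNhd_id.sub analyticOnNhd_const).pow s).smul analyticOnNhd_const).sub
      (analyticOnNhd_tsum_sub_pow_smul hps)
  · rw [smul_sub, ← ((hsum lam h0 h1).pow_smul_of_zpow_sub_smul (norm_pos_iff.mp h0)).tsum_eq]
  · rw [hGz, ContinuousLinearMap.toLinearMap_neg, LinearMap.ker_neg] at hker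
    exact hE (F 0 : E →ₗ[ℂ] E).finite_of_finite_ker_of_finite_range

/-- Pole cancellation for a finitely meromorphic operator-valued function: if
`𝓕(λ) = Σ_{n : ℕ} (λ - z)^{n - s} • F n` on the punctured disk, then
`T̃(λ) = (λ - z)^s • (I - 𝓕(λ))` extends holomorphically to the disk with value
`-(F 0)` at `z`; if moreover `F 0` has finite rank, the kernel of the extension
at `z` is infinite-dimensional. -/
theorem stmt11 (E : Type*) [NormedAddCommGroup E] [NormedSpace ℂ E] [CompleteSpace E]
    (hE : ¬ FiniteDimensional ℂ E)
    (z : ℂ) (r : ℝ) (hr : 0 < r) (s : ℕ) (hs : 1 ≤ s)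
    (F : ℕ → E →L[ℂ] E) (𝓕 : ℂ → E →L[ℂ] E)
    (hsum : ∀ lam : ℂ, 0 < ‖lam - z‖ → ‖lam - z‖ < r →
      HasSum (fun n : ℕ => ((lam - z) ^ ((n : ℤ) - (s : ℤ))) • F n) (𝓕 lam))
    (hps : ∀ lam : ℂ, ‖lam - z‖ < r →
      Summable (fun n : ℕ => ((lam - z) ^ n) • F n)) :
    ∃ G : ℂ → E →L[ℂ] E,
      AnalyticOnNhd ℂ G (ball z r) ∧
      (∀ lam : ℂ, 0 < ‖lam - z‖ → ‖lam - z‖ < r →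
        G lam = ((lam - z) ^ s) •
          (ContinuousLinearMap.id ℂ E - 𝓕 lam)) ∧
      G z = -(F 0) ∧
      (FiniteDimensional ℂ (LinearMap.range (F 0 : E →ₗ[ℂ] E)) →
        ¬ FiniteDimensional ℂ (LinearMap.ker (G z : E →ₗ[ℂ] E))) :=
  stmt11_general E hE z r s hs F 𝓕 hsum hps
end
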